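/- Let γ : J → M₂(ℝ) be a smooth null curve parameterized by proper time with bending κ and frame T := (1/√2)γ', N := (1/2)γ'', B := (1/√2)κγ' − (1/(2√2))γ'''. Then the Frenet-type equations hold: γ' = √2·T, T' = √2·N, N' = √2κ·T − √2·B, and B' = √2·γ − √2κ·N. Equivalently, γ satisfies the fourth-order equation γ'''' = 2κ'γ' + 4κγ'' − 4γ. -/

import Mathlib

noncomputable section

open Matrix Set

attribute [local instance] Matrix.normedAddCommGroup Matrix.normedSpace

/-- The space of 2×2 real matrices. -/
abbrev M2 : Type := Matrix (Fin 2) (Fin 2) ℝ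

/-- The symmetric bilinear form of signature (−,−,+,+) on `M₂(ℝ)`, with `⟨X,X⟩ = -det X`. -/
def ip (X Y : M2) : ℝ :=
  (1 / 2) * (X 0 1 * Y 1 0 + X 1 0 * Y 0 1 - X 0 0 * Y 1 1 - X 1 1 * Y 0 0)

/-- First derivative. -/
def d1 (γ : ℝ → M2) : ℝ → M2 := deriv γ
/-- Second derivative. -/
def d2 (γ : ℝ → M2) : ℝ → M2 := deriv (deriv γ)
/-- Third derivative. -/
def d3 (γ : ℝ → M2) : ℝ → M2 := deriv (deriv (deriv γ))
/-- Fourth derivative. -/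
def d4 (γ : ℝ → M2) : ℝ → M2 := deriv (deriv (deriv (deriv γ)))

/-- The bending `κ(s) = -(1/16)⟨γ'''(s), γ'''(s)⟩` of a null curve parameterized by
proper time. -/
def bending (γ : ℝ → M2) (s : ℝ) : ℝ := -(1 / 16) * ip (d3 γ s) (d3 γ s)

/-- The tangent vector field `T = (1/√2)γ'`. -/
def Tf (γ : ℝ → M2) (s : ℝ) : M2 := (1 / Real.sqrt 2) • d1 γ s
/-- The normal vector field `N = (1/2)γ''`. -/
def Nf (γ : ℝ → M2) (s : ℝ) : M2 := (1 / 2 : ℝ) • d2 γ s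
/-- The binormal vector field `B = (1/√2)κγ' - (1/(2√2))γ'''`. -/
def Bf (γ : ℝ → M2) (s : ℝ) : M2 :=
  (bending γ s / Real.sqrt 2) • d1 γ s - (1 / (2 * Real.sqrt 2)) • d3 γ s

lemma ip_comm (X Y : M2) : ip X Y = ip Y X := by simp [ip]; ring

lemma ip_self (X : M2) : ip X X = -X.det := by
  simp [ip, Matrix.det_fin_two]; ring

def entryCLM (i j : Fin 2) : M2 →L[ℝ] ℝ :=
  (ContinuousLinearMap.proj j).comp
    (ContinuousLinearMap.proj (R := ℝ) (φ := fun _ : Fin 2 => Fin 2 → ℝ) i)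

lemma hasDerivAt_entry {f : ℝ → M2} {f' : M2} {s : ℝ} (h : HasDerivAt f f' s) (i j : Fin 2) :
    HasDerivAt (fun t => f t i j) (f' i j) s :=
  ((entryCLM i j).hasFDerivAt.comp_hasDerivAt s h)

lemma ip_hasDerivAt {f g : ℝ → M2} {f' g' : M2} {s : ℝ}
    (hf : HasDerivAt f f' s) (hg : HasDerivAt g g' s) :
    HasDerivAt (fun t => ip (f t) (g t)) (ip f' (g s) + ip (f s) g') s := by
  have H : ∀ (i j k l : Fin 2), HasDerivAt (fun t => f t i j * g t k l)
      (f' i j * g s k l + f s i j * g' k l) s :=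
    fun i j k l => (hasDerivAt_entry hf i j).mul (hasDerivAt_entry hg k l)
  have h1 := (((H 0 1 1 0).add (H 1 0 0 1)).sub ((H 0 0 1 1).add (H 1 1 0 0))).const_mul (1/2 : ℝ)
  convert h1 using 1
  · rfl
  · rfl
  · ext t; simp only [ip, Pi.add_apply, Pi.sub_apply]; ring
  · simp only [ip]; ring

lemma key_lin (w0 w1 w2 w3 v : M2) (k : ℝ)
    (h00 : ip w0 w0 = -1) (h01 : ip w0 w1 = 0) (h02 : ip w0 w2 = 0) (h03 : ip w0 w3 = 0)
    (h11 : ip w1 w1 = 0) (h12 : ip w1 w2 = 0) (h13 : ip w1 w3 = -4)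
    (h22 : ip w2 w2 = 4) (h23 : ip w2 w3 = 0) (h33 : ip w3 w3 = -16 * k)
    (hv0 : ip w0 v = 0) (hv1 : ip w1 v = 0) (hv2 : ip w2 v = 0) (hv3 : ip w3 v = 0) :
    v = 0 := by
  simp only [ip] at h00 h01 h02 h03 h11 h12 h13 h22 h23 h33 hv0 hv1 hv2 hv3
  set A : Matrix (Fin 4) (Fin 4) ℝ := Matrix.of
    ![![w0 0 0, w0 0 1, w0 1 0, w0 1 1],
      ![w1 0 0, w1 0 1, w1 1 0, w1 1 1],
      ![w2 0 0, w2 0 1, w2 1 0, w2 1 1],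
      ![w3 0 0, w3 0 1, w3 1 0, w3 1 1]] with hA
  set B : Matrix (Fin 4) (Fin 4) ℝ := Matrix.of
    ![![-(w0 1 1)/2, -(w1 1 1)/2, -(w2 1 1)/2, -(w3 1 1)/2],
      ![w0 1 0/2, w1 1 0/2, w2 1 0/2, w3 1 0/2],
      ![w0 0 1/2, w1 0 1/2, w2 0 1/2, w3 0 1/2],
      ![-(w0 0 0)/2, -(w1 0 0)/2, -(w2 0 0)/2, -(w3 0 0)/2]] with hB
  have hG : A * B = !![(-1:ℝ),0,0,0; 0,0,0,-4; 0,0,4,0; 0,-4,0,-16*k] := by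
    ext i j
    fin_cases i <;> fin_cases j <;>
      simp [hA, hB, Matrix.mul_apply, Fin.sum_univ_four, Matrix.vecHead, Matrix.vecTail]
    · linear_combination h00
    · linear_combination h01
    · linear_combination h02
    · linear_combination h03
    · linear_combination h01
    · linear_combination h11
    · linear_combination h12
    · linear_combination h13
    · linear_combination h02
    · linear_combination h12
    · linear_combination h22
    · linear_combination h23
    · linear_combination h03
    · linear_combination h13
    · linear_combination h23
    · linear_combination h33
  have hdetA : IsUnit A.det := by
    have hd : A.det * B.det = 64 := by
      rw [← Matrix.det_mul, hG]
      simp [Matrix.det_succ_row_zero, Fin.sum_univ_succ]; ring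
    refine isUnit_iff_ne_zero.mpr fun h0 => ?_
    rw [h0, zero_mul] at hd
    norm_num at hd
  set y : Fin 4 → ℝ := ![-(v 1 1)/2, v 1 0/2, v 0 1/2, -(v 0 0)/2] with hy
  have hAy : A *ᵥ y = 0 := by
    ext i
    fin_cases i <;>
      simp [hA, hy, Matrix.mulVec, dotProduct, Fin.sum_univ_four,
        Matrix.vecHead, Matrix.vecTail]
    · linear_combination hv0
    · linear_combination hv1
    · linear_combination hv2
    · linear_combination hv3
  have hy0 : y = 0 := by
    have := congrArg (fun z => A⁻¹ *ᵥ z) hAy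
    simpa [Matrix.mulVec_mulVec, Matrix.nonsing_inv_mul A hdetA] using this
  have e0 := congrFun hy0 0
  have e1 := congrFun hy0 1
  have e2 := congrFun hy0 2
  have e3 := congrFun hy0 3
  simp [hy] at e0 e1 e2 e3
  ext i j
  fin_cases i <;> fin_cases j <;> simp_all

/-- Along a smooth null curve `γ : J → AdS` parameterized by proper time with
bending `κ`, the Frenet-type equations hold: `γ' = √2·T`, `T' = √2·N`,
`N' = √2κ·T − √2·B`, `B' = √2·γ − √2κ·N`; equivalently `γ` satisfies the fourth-order
equation `γ'''' = 2κ'γ' + 4κγ'' − 4γ`. -/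
theorem stmt4 (J : Set ℝ) (hJopen : IsOpen J) (hJint : J.OrdConnected)
    (γ : ℝ → M2) (hγ : ContDiffOn ℝ (⊤ : ℕ∞) γ J)
    (hdet : ∀ s ∈ J, (γ s).det = 1)
    (hnull : ∀ s ∈ J, ip (d1 γ s) (d1 γ s) = 0)
    (hproper : ∀ s ∈ J, ip (d2 γ s) (d2 γ s) = 4) :
    ∀ s ∈ J,
      deriv γ s = Real.sqrt 2 • Tf γ s ∧
      deriv (Tf γ) s = Real.sqrt 2 • Nf γ s ∧
      deriv (Nf γ) s = (Real.sqrt 2 * bending γ s) • Tf γ s - Real.sqrt 2 • Bf γ s ∧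
      deriv (Bf γ) s = Real.sqrt 2 • γ s - (Real.sqrt 2 * bending γ s) • Nf γ s ∧
      d4 γ s = (2 * deriv (bending γ) s) • d1 γ s + (4 * bending γ s) • d2 γ s
        - (4 : ℝ) • γ s := by
  have hmem : ∀ ⦃t : ℝ⦄, t ∈ J → J ∈ nhds t := fun t ht => hJopen.mem_nhds ht
  have h1 : ContDiffOn ℝ (⊤ : ℕ∞) (deriv γ) J := hγ.deriv_of_isOpen hJopen (by simp)
  have h2 : ContDiffOn ℝ (⊤ : ℕ∞) (deriv (deriv γ)) J := h1.deriv_of_isOpen hJopen (by simp)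
  have h3 : ContDiffOn ℝ (⊤ : ℕ∞) (deriv (deriv (deriv γ))) J := h2.deriv_of_isOpen hJopen (by simp)
  have D0 : ∀ t ∈ J, HasDerivAt γ (d1 γ t) t :=
    fun t ht => ((hγ.contDiffAt (hmem ht)).differentiableAt (by simp)).hasDerivAt
  have D1 : ∀ t ∈ J, HasDerivAt (d1 γ) (d2 γ t) t :=
    fun t ht => ((h1.contDiffAt (hmem ht)).differentiableAt (by simp)).hasDerivAt
  have D2 : ∀ t ∈ J, HasDerivAt (d2 γ) (d3 γ t) t :=
    fun t ht => ((h2.contDiffAt (hmem ht)).differentiableAt (by simp)).hasDerivAt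
  have D3 : ∀ t ∈ J, HasDerivAt (d3 γ) (d4 γ t) t :=
    fun t ht => ((h3.contDiffAt (hmem ht)).differentiableAt (by simp)).hasDerivAt
  -- helper: a function constant on J has zero derivative at points of J
  have step : ∀ (f g f' g' : ℝ → M2) (c : ℝ),
      (∀ t ∈ J, HasDerivAt f (f' t) t) → (∀ t ∈ J, HasDerivAt g (g' t) t) →
      (∀ u ∈ J, ip (f u) (g u) = c) →
      ∀ t ∈ J, ip (f' t) (g t) + ip (f t) (g' t) = 0 := by
    intro f g f' g' c hf hg hc t ht
    have hD := ip_hasDerivAt (hf t ht) (hg t ht)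
    have hE : (fun u => ip (f u) (g u)) =ᶠ[nhds t] (fun _ => c) :=
      Filter.eventuallyEq_of_mem (hmem ht) hc
    have h0 : HasDerivAt (fun u => ip (f u) (g u)) 0 t :=
      (hasDerivAt_const t c).congr_of_eventuallyEq hE
    exact hD.unique h0
  have r00 : ∀ u ∈ J, ip (γ u) (γ u) = -1 := by
    intro u hu; rw [ip_self, hdet u hu]
  have s01 : ∀ t ∈ J, ip (γ t) (d1 γ t) = 0 := by
    intro t ht
    have h := step γ γ (d1 γ) (d1 γ) (-1) D0 D0 r00 t ht
    have hc := ip_comm (d1 γ t) (γ t)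
    linarith
  have s12 : ∀ t ∈ J, ip (d1 γ t) (d2 γ t) = 0 := by
    intro t ht
    have h := step (d1 γ) (d1 γ) (d2 γ) (d2 γ) 0 D1 D1 hnull t ht
    have hc := ip_comm (d2 γ t) (d1 γ t)
    linarith
  have s02 : ∀ t ∈ J, ip (γ t) (d2 γ t) = 0 := by
    intro t ht
    have h := step γ (d1 γ) (d1 γ) (d2 γ) 0 D0 D1 s01 t ht
    have h2 := hnull t ht
    linarith
  have s03 : ∀ t ∈ J, ip (γ t) (d3 γ t) = 0 := by
    intro t ht
    have h := step γ (d2 γ) (d1 γ) (d3 γ) 0 D0 D2 s02 t ht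
    have h2 := s12 t ht
    linarith
  have s23 : ∀ t ∈ J, ip (d2 γ t) (d3 γ t) = 0 := by
    intro t ht
    have h := step (d2 γ) (d2 γ) (d3 γ) (d3 γ) 4 D2 D2 hproper t ht
    have hc := ip_comm (d3 γ t) (d2 γ t)
    linarith
  have s13 : ∀ t ∈ J, ip (d1 γ t) (d3 γ t) = -4 := by
    intro t ht
    have h := step (d1 γ) (d2 γ) (d2 γ) (d3 γ) 0 D1 D2 s12 t ht
    have h2 := hproper t ht
    linarith
  have s04 : ∀ t ∈ J, ip (γ t) (d4 γ t) = 4 := by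
    intro t ht
    have h := step γ (d3 γ) (d1 γ) (d4 γ) 0 D0 D3 s03 t ht
    have h2 := s13 t ht
    linarith
  have s14 : ∀ t ∈ J, ip (d1 γ t) (d4 γ t) = 0 := by
    intro t ht
    have h := step (d1 γ) (d3 γ) (d2 γ) (d4 γ) (-4) D1 D3 s13 t ht
    have h2 := s23 t ht
    linarith
  have s33 : ∀ t : ℝ, ip (d3 γ t) (d3 γ t) = -16 * bending γ t := by
    intro t; simp only [bending]; ring
  have s24 : ∀ t ∈ J, ip (d2 γ t) (d4 γ t) = 16 * bending γ t := by
    intro t ht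
    have h := step (d2 γ) (d3 γ) (d3 γ) (d4 γ) 0 D2 D3 s23 t ht
    have h2 := s33 t
    linarith
  have Dk : ∀ t ∈ J, HasDerivAt (bending γ)
      (-(1/8) * ip (d3 γ t) (d4 γ t)) t := by
    intro t ht
    have h := (ip_hasDerivAt (D3 t ht) (D3 t ht)).const_mul (-(1/16) : ℝ)
    have hval : -(1/8) * ip (d3 γ t) (d4 γ t)
        = (-(1/16) : ℝ) * (ip (d4 γ t) (d3 γ t) + ip (d3 γ t) (d4 γ t)) := by
      rw [ip_comm (d4 γ t)]; ring
    rw [hval]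
    exact h
  have s34 : ∀ t ∈ J, ip (d3 γ t) (d4 γ t) = -8 * deriv (bending γ) t := by
    intro t ht
    have h := (Dk t ht).deriv
    linarith
  intro s hs
  have hsqrt : Real.sqrt 2 ≠ 0 := by positivity
  have hss : Real.sqrt 2 * Real.sqrt 2 = 2 := Real.mul_self_sqrt (by norm_num)
  -- the fourth-order equation
  have hODE : d4 γ s = (2 * deriv (bending γ) s) • d1 γ s + (4 * bending γ s) • d2 γ s
      - (4 : ℝ) • γ s := by
    set k := bending γ s with hk
    set k' := deriv (bending γ) s with hk'
    set v : M2 := d4 γ s -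
      ((2 * k') • d1 γ s + (4 * k) • d2 γ s - (4 : ℝ) • γ s) with hv
    have a00 := r00 s hs
    have a01 := s01 s hs
    have a02 := s02 s hs
    have a03 := s03 s hs
    have a11 := hnull s hs
    have a12 := s12 s hs
    have a13 := s13 s hs
    have a22 := hproper s hs
    have a23 := s23 s hs
    have a33 := s33 s
    have a04 := s04 s hs
    have a14 := s14 s hs
    have a24 := s24 s hs
    have a34 := s34 s hs
    have hv0 : ip (γ s) v = 0 := by
      simp only [hv, ip, Matrix.sub_apply, Matrix.add_apply, Matrix.smul_apply,
        smul_eq_mul] at *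
      linear_combination a04 - 2*k'*a01 - 4*k*a02 + 4*a00
    have hv1 : ip (d1 γ s) v = 0 := by
      simp only [hv, ip, Matrix.sub_apply, Matrix.add_apply, Matrix.smul_apply,
        smul_eq_mul] at *
      linear_combination a14 - 2*k'*a11 - 4*k*a12 + 4*a01
    have hv2 : ip (d2 γ s) v = 0 := by
      have hc := ip_comm (d1 γ s) (d2 γ s)
      simp only [hv, ip, Matrix.sub_apply, Matrix.add_apply, Matrix.smul_apply,
        smul_eq_mul] at *
      linear_combination a24 - 2*k'*hc - 2*k'*a12 - 4*k*a22 + 4*a02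
    have hv3 : ip (d3 γ s) v = 0 := by
      have hc1 := ip_comm (d1 γ s) (d3 γ s)
      have hc2 := ip_comm (d2 γ s) (d3 γ s)
      have hc4 := ip_comm (γ s) (d3 γ s)
      simp only [hv, ip, Matrix.sub_apply, Matrix.add_apply, Matrix.smul_apply,
        smul_eq_mul] at *
      linear_combination a34 - 2*k'*hc1 - 2*k'*a13 - 4*k*hc2 - 4*k*a23 + 4*hc4 + 4*a03
    have hveq : v = 0 :=
      key_lin (γ s) (d1 γ s) (d2 γ s) (d3 γ s) v k
        a00 a01 a02 a03 a11 a12 a13 a22 a23 (by rw [a33]) hv0 hv1 hv2 hv3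
    have := sub_eq_zero.mp (hv ▸ hveq)
    exact this
  refine ⟨?_, ?_, ?_, ?_, hODE⟩
  · -- γ' = √2 T
    show d1 γ s = Real.sqrt 2 • Tf γ s
    rw [Tf, smul_smul, mul_one_div, div_self hsqrt, one_smul]
  · -- T' = √2 N
    have hT : HasDerivAt (Tf γ) ((1 / Real.sqrt 2) • d2 γ s) s := by
      have := (D1 s hs).const_smul ((1 : ℝ) / Real.sqrt 2)
      exact this
    refine hT.deriv.trans ?_; rw [Nf, smul_smul]
    congr 1
    field_simp; rw [Real.sq_sqrt (by norm_num)]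
  · -- N' = √2κ T − √2 B
    have hN : HasDerivAt (Nf γ) ((1 / 2 : ℝ) • d3 γ s) s := by
      have := (D2 s hs).const_smul ((1 / 2 : ℝ))
      exact this
    refine hN.deriv.trans ?_; rw [Tf, Bf, smul_sub, smul_smul, smul_smul, smul_smul]
    match_scalars <;> field_simp <;>
      first
        | ring1
        | linear_combination (2 * Real.sqrt 2 * bending γ s) * hss
        | linear_combination (-2 * Real.sqrt 2 * bending γ s) * hss
        | linear_combination (2 : ℝ) * hss
        | linear_combination (-2 : ℝ) * hss
  · -- B' = √2 γ − √2κ N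
    have hk0 : HasDerivAt (fun t => bending γ t / Real.sqrt 2)
        (deriv (bending γ) s / Real.sqrt 2) s :=
      ((Dk s hs).differentiableAt.hasDerivAt).div_const _
    have hB : HasDerivAt (Bf γ)
        ((bending γ s / Real.sqrt 2) • d2 γ s
          + (deriv (bending γ) s / Real.sqrt 2) • d1 γ s
          - (1 / (2 * Real.sqrt 2)) • d4 γ s) s := by
      have h1 := hk0.smul (D1 s hs)
      have h2 := (D3 s hs).const_smul ((1 / (2 * Real.sqrt 2)) : ℝ)
      exact h1.sub h2
    refine hB.deriv.trans ?_; rw [hODE, Nf]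
    match_scalars <;> field_simp <;>
      first
        | ring1
        | linear_combination (bending γ s) * hss
        | linear_combination (2 * Real.sqrt 2 * bending γ s) * hss
        | linear_combination (-2 * Real.sqrt 2 * bending γ s) * hss
        | linear_combination (2 : ℝ) * hss
        | linear_combination (-2 : ℝ) * hss
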